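/- arXiv:1801.04707 — 3 statements merged into one kernel-verified Lean document; each statement's English description precedes it below -/
import Mathlib

section
/- Let U, P1, P2 be reflexive Banach spaces and let b1 : P1 × U → ℝ and b2 : P2 × U → ℝ be bounded bilinear forms. Define Z_{b2} = {v ∈ U : b2(p2, v) = 0 for all p2 ∈ P2}. Then the following are equivalent: (1) there exists c > 0 such that for all (p1, p2) ∈ P1 × P2, sup_{v ∈ U, v ≠ 0} (b1(p1, v) + b2(p2, v)) / ‖v‖_U ≥ c(‖p1‖ + ‖p2‖); (2) there exists c > 0 such that sup_{v ∈ Z_{b2}, v ≠ 0} b1(p1, v)/‖v‖_U ≥ c‖p1‖ for all p1 ∈ P1, and sup_{v ∈ U, v ≠ 0} b2(p2, v)/‖v‖_U ≥ c‖p2‖ for all p2 ∈ P2. -/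
/-!
Both suprema are operator norms: that of `b1 p1 + b2 p2` on `U`, and that of the restriction of
`b1 p1` to `Z = Z_{b2}`. Going from (2) to (1) is then the triangle inequality
`‖b2 p2‖ ≤ ‖b1 p1 + b2 p2‖ + ‖b1‖ ‖p1‖`. Going from (1) to (2) rests on
`inf_{p2} ‖b1 p1 + b2 p2‖ ≤ ‖(b1 p1)|_Z‖`: a norm-preserving Hahn–Banach extension `F` of
`(b1 p1)|_Z` differs from `b1 p1` by a functional vanishing on `Z`, and since `U` is reflexive the
separation theorem puts every such functional in the closure of the range of `b2`.
-/

open NormedSpace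

namespace ContinuousLinearMap

variable {P U : Type*} [NormedAddCommGroup P] [NormedSpace ℝ P]
  [NormedAddCommGroup U] [NormedSpace ℝ U]

theorem iSup_div_norm_eq_opNorm (f : U →L[ℝ] ℝ) :
    ⨆ v : {v : U // v ≠ 0}, f v.1 / ‖v.1‖ = ‖f‖ := by
  have hbound : ∀ v : {v : U // v ≠ 0}, f v.1 / ‖v.1‖ ≤ ‖f‖ := fun v => by
    rw [div_le_iff₀ (norm_pos_iff.2 v.2)]
    exact (le_abs_self _).trans (f.le_opNorm v.1)
  refine le_antisymm (Real.iSup_le hbound (norm_nonneg f)) ?_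
  rcases isEmpty_or_nonempty {v : U // v ≠ 0} with hU | ⟨⟨v₀, hv₀⟩⟩
  · rw [Real.iSup_of_isEmpty]
    refine f.opNorm_le_bound le_rfl fun v => ?_
    obtain rfl : v = 0 := by_contra fun hv => hU.false ⟨v, hv⟩
    simp
  have hbdd : BddAbove (Set.range fun v : {v : U // v ≠ 0} => f v.1 / ‖v.1‖) :=
    ⟨‖f‖, by rintro _ ⟨v, rfl⟩; exact hbound v⟩
  have hle : ∀ v : U, v ≠ 0 → f v ≤ (⨆ v : {v : U // v ≠ 0}, f v.1 / ‖v.1‖) * ‖v‖ := fun v hv =>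
    (div_le_iff₀ (norm_pos_iff.2 hv)).1 (le_ciSup hbdd ⟨v, hv⟩)
  have habs : ∀ v : U, |f v| ≤ (⨆ v : {v : U // v ≠ 0}, f v.1 / ‖v.1‖) * ‖v‖ := by
    intro v
    rcases eq_or_ne v 0 with rfl | hv
    · simp
    · refine abs_le.2 ⟨?_, hle v hv⟩
      exact neg_le.1 (by simpa using hle (-v) (neg_ne_zero.2 hv))
  have hnonneg : 0 ≤ ⨆ v : {v : U // v ≠ 0}, f v.1 / ‖v.1‖ :=
    nonneg_of_mul_nonneg_left ((abs_nonneg _).trans (habs v₀)) (norm_pos_iff.2 hv₀)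
  exact f.opNorm_le_bound hnonneg habs

theorem iSup_mem_div_norm_eq_opNorm_comp_subtypeL (Z : Submodule ℝ U) (f : U →L[ℝ] ℝ) :
    ⨆ v : {v : U // v ∈ Z ∧ v ≠ 0}, f v.1 / ‖v.1‖ = ‖f.comp Z.subtypeL‖ := by
  rw [← iSup_div_norm_eq_opNorm]
  let e : {v : U // v ∈ Z ∧ v ≠ 0} ≃ {v : Z // v ≠ 0} :=
    { toFun := fun v => ⟨⟨v.1, v.2.1⟩, fun h => v.2.2 (congrArg Subtype.val h)⟩
      invFun := fun v => ⟨v.1.1, v.1.2, fun h => v.2 (Subtype.ext h)⟩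
      left_inv := fun _ => rfl
      right_inv := fun _ => rfl }
  exact e.iSup_congr fun _ => rfl

/-- The paper's `Z_b`. -/
def rightKer (b : P →L[ℝ] U →L[ℝ] ℝ) : Submodule ℝ U where
  carrier := {v | ∀ p, b p v = 0}
  add_mem' hx hy p := by simp [hx p, hy p]
  zero_mem' p := by simp
  smul_mem' c v hv p := by simp [hv p]

theorem mem_topologicalClosure_of_forall_eq_zero
    (hU : Function.Surjective (inclusionInDoubleDual ℝ U)) (S : Submodule ℝ (U →L[ℝ] ℝ))
    {g : U →L[ℝ] ℝ} (hg : ∀ v, (∀ φ ∈ S, φ v = 0) → g v = 0) : g ∈ S.topologicalClosure := by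
  by_contra hgS
  obtain ⟨Φ, u, hΦS, hΦg⟩ := geometric_hahn_banach_closed_point
    S.topologicalClosure.convex S.isClosed_topologicalClosure hgS
  -- `Φ` is bounded above on the subspace `S`, hence vanishes on it.
  have hΦ : ∀ φ ∈ S, Φ φ = 0 := by
    intro φ hφ
    by_contra hne
    have := hΦS ((u / Φ φ) • φ) (S.le_topologicalClosure (S.smul_mem _ hφ))
    rw [map_smul, smul_eq_mul, div_mul_cancel₀ _ hne] at this
    exact this.false
  obtain ⟨v, rfl⟩ := hU Φ
  have h0 := hΦS 0 (zero_mem _)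
  simp only [dual_def, map_zero] at h0 hΦg hΦ
  linarith [hg v hΦ]

theorem opNorm_comp_rightKer_le (b : P →L[ℝ] U →L[ℝ] ℝ) (f : U →L[ℝ] ℝ) (p : P) :
    ‖f.comp (rightKer b).subtypeL‖ ≤ ‖f + b p‖ := by
  have hf : f.comp (rightKer b).subtypeL = (f + b p).comp (rightKer b).subtypeL := by
    ext ⟨v, hv⟩
    simp [hv p]
  rw [hf]
  exact (opNorm_comp_le _ _).trans
    (mul_le_of_le_one_right (norm_nonneg _) (Submodule.norm_subtypeL_le _))

theorem exists_norm_add_le_opNorm_comp_rightKer_add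
    (hU : Function.Surjective (inclusionInDoubleDual ℝ U)) (b : P →L[ℝ] U →L[ℝ] ℝ)
    (f : U →L[ℝ] ℝ) {ε : ℝ} (hε : 0 < ε) :
    ∃ p, ‖f + b p‖ ≤ ‖f.comp (rightKer b).subtypeL‖ + ε := by
  obtain ⟨F, hFf, hF⟩ := exists_extension_norm_eq (rightKer b) (f.comp (rightKer b).subtypeL)
  have hFf' : ∀ v ∈ rightKer b, F v = f v := fun v hv => hFf ⟨v, hv⟩
  have hclosure : F - f ∈ (LinearMap.range (b : P →ₗ[ℝ] U →L[ℝ] ℝ)).topologicalClosure := by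
    refine mem_topologicalClosure_of_forall_eq_zero hU _ fun v hv => ?_
    have hvZ : v ∈ rightKer b := fun p => hv (b p) ⟨p, rfl⟩
    simp [hFf' v hvZ]
  rw [← SetLike.mem_coe, Submodule.topologicalClosure_coe, Metric.mem_closure_iff] at hclosure
  obtain ⟨_, ⟨p, rfl⟩, hp⟩ := hclosure ε hε
  refine ⟨p, ?_⟩
  calc ‖f + b p‖ = ‖F - (F - f - b p)‖ := by abel_nf
    _ ≤ ‖F‖ + ‖F - f - b p‖ := norm_sub_le _ _
    _ ≤ ‖f.comp (rightKer b).subtypeL‖ + ε := by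
      rw [hF, ← dist_eq_norm]
      exact (add_le_add_iff_left _).2 hp.le

end ContinuousLinearMap

open ContinuousLinearMap in
theorem stmt_0_general {U P1 P2 : Type*}
    [NormedAddCommGroup U] [NormedSpace ℝ U]
    [NormedAddCommGroup P1] [NormedSpace ℝ P1]
    [NormedAddCommGroup P2] [NormedSpace ℝ P2]
    -- reflexivity of the three Banach spaces
    (hUrefl : Function.Surjective ⇑(NormedSpace.inclusionInDoubleDual ℝ U))
    (b1 : P1 →L[ℝ] U →L[ℝ] ℝ) (b2 : P2 →L[ℝ] U →L[ℝ] ℝ) :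
    (∃ c > 0, ∀ (p1 : P1) (p2 : P2),
        c * (‖p1‖ + ‖p2‖) ≤ ⨆ v : {v : U // v ≠ 0}, (b1 p1 v.1 + b2 p2 v.1) / ‖v.1‖)
    ↔
    (∃ c > 0,
      (∀ p1 : P1,
        c * ‖p1‖ ≤ ⨆ v : {v : U // (∀ p2 : P2, b2 p2 v = 0) ∧ v ≠ 0}, b1 p1 v.1 / ‖v.1‖) ∧
      (∀ p2 : P2,
        c * ‖p2‖ ≤ ⨆ v : {v : U // v ≠ 0}, b2 p2 v.1 / ‖v.1‖)) := by
  have hsum : ∀ p1 p2, ⨆ v : {v : U // v ≠ 0}, (b1 p1 v.1 + b2 p2 v.1) / ‖v.1‖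
      = ‖b1 p1 + b2 p2‖ := fun p1 p2 => iSup_div_norm_eq_opNorm (b1 p1 + b2 p2)
  have hker : ∀ p1, ⨆ v : {v : U // (∀ p2 : P2, b2 p2 v = 0) ∧ v ≠ 0}, b1 p1 v.1 / ‖v.1‖
      = ‖(b1 p1).comp (rightKer b2).subtypeL‖ :=
    fun p1 => iSup_mem_div_norm_eq_opNorm_comp_subtypeL (rightKer b2) (b1 p1)
  simp only [hsum, hker, iSup_div_norm_eq_opNorm]
  constructor
  · rintro ⟨c, hc, H⟩
    refine ⟨c, hc, fun p1 => le_of_forall_pos_le_add fun ε hε => ?_,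
      fun p2 => by simpa using H 0 p2⟩
    obtain ⟨p2, hp2⟩ := exists_norm_add_le_opNorm_comp_rightKer_add hUrefl b2 (b1 p1) hε
    calc c * ‖p1‖ ≤ c * (‖p1‖ + ‖p2‖) := by gcongr; exact le_add_of_nonneg_right (norm_nonneg _)
      _ ≤ ‖b1 p1 + b2 p2‖ := H p1 p2
      _ ≤ _ := hp2
  · rintro ⟨c, hc, H1, H2⟩
    -- `‖p1‖ ≤ N / c` and `‖p2‖ ≤ (N + ‖b1‖ N / c) / c` for `N = ‖b1 p1 + b2 p2‖`
    refine ⟨c * c / (2 * (c + ‖b1‖)), by positivity, fun p1 p2 => ?_⟩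
    have h1 : c * ‖p1‖ ≤ ‖b1 p1 + b2 p2‖ := (H1 p1).trans (opNorm_comp_rightKer_le b2 (b1 p1) p2)
    have h2 : c * ‖p2‖ ≤ ‖b1 p1 + b2 p2‖ + ‖b1‖ * ‖p1‖ :=
      calc c * ‖p2‖ ≤ ‖b2 p2‖ := H2 p2
        _ = ‖(b1 p1 + b2 p2) - b1 p1‖ := by rw [add_sub_cancel_left]
        _ ≤ ‖b1 p1 + b2 p2‖ + ‖b1‖ * ‖p1‖ :=
          (norm_sub_le _ _).trans (by gcongr; exact b1.le_opNorm p1)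
    rw [div_mul_eq_mul_div, div_le_iff₀ (by positivity)]
    nlinarith [norm_nonneg b1, norm_nonneg p1, norm_nonneg p2, norm_nonneg (b1 p1 + b2 p2)]

/-- Howell–Walkington combined inf-sup equivalence (reduced version of Theorem 3.1). -/
theorem stmt_0 {U P1 P2 : Type*}
    [NormedAddCommGroup U] [NormedSpace ℝ U] [CompleteSpace U]
    [NormedAddCommGroup P1] [NormedSpace ℝ P1] [CompleteSpace P1]
    [NormedAddCommGroup P2] [NormedSpace ℝ P2] [CompleteSpace P2]
    -- reflexivity of the three Banach spaces
    (hUrefl : Function.Surjective ⇑(NormedSpace.inclusionInDoubleDual ℝ U))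
    (hP1refl : Function.Surjective ⇑(NormedSpace.inclusionInDoubleDual ℝ P1))
    (hP2refl : Function.Surjective ⇑(NormedSpace.inclusionInDoubleDual ℝ P2))
    (b1 : P1 →L[ℝ] U →L[ℝ] ℝ) (b2 : P2 →L[ℝ] U →L[ℝ] ℝ) :
    (∃ c > 0, ∀ (p1 : P1) (p2 : P2),
        c * (‖p1‖ + ‖p2‖) ≤ ⨆ v : {v : U // v ≠ 0}, (b1 p1 v.1 + b2 p2 v.1) / ‖v.1‖)
    ↔
    (∃ c > 0,
      (∀ p1 : P1,
        c * ‖p1‖ ≤ ⨆ v : {v : U // (∀ p2 : P2, b2 p2 v = 0) ∧ v ≠ 0}, b1 p1 v.1 / ‖v.1‖) ∧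
      (∀ p2 : P2,
        c * ‖p2‖ ≤ ⨆ v : {v : U // v ≠ 0}, b2 p2 v.1 / ‖v.1‖)) :=
  stmt_0_general hUrefl b1 b2
end

section
/- Let A be an n × n symmetric positive definite real matrix, B an m × n real matrix, and M an m × m symmetric positive definite real matrix. Suppose there exist constants c_b > 0 and c_s > 0 such that |qᵀBv| ≤ (c_b/√c_s)·√(vᵀAv)·√(qᵀMq) for all v ∈ ℝ^n and q ∈ ℝ^m. Then for all q ∈ ℝ^m, qᵀ(B A⁻¹ Bᵀ)q ≤ (c_b/√c_s)²·(qᵀMq). -/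
open Matrix

theorem stmt_3 {n m : ℕ}
    (A : Matrix (Fin n) (Fin n) ℝ) (B : Matrix (Fin m) (Fin n) ℝ)
    (M : Matrix (Fin m) (Fin m) ℝ)
    (hA : A.PosDef) (hM : M.PosDef) (c_b c_s : ℝ) (hcb : 0 < c_b) (hcs : 0 < c_s)
    (hbound : ∀ (v : Fin n → ℝ) (q : Fin m → ℝ),
      |q ⬝ᵥ B.mulVec v| ≤
        (c_b / Real.sqrt c_s) * Real.sqrt (v ⬝ᵥ A.mulVec v) * Real.sqrt (q ⬝ᵥ M.mulVec q)) :
    ∀ q : Fin m → ℝ,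
      q ⬝ᵥ (B * A⁻¹ * Bᵀ).mulVec q ≤ (c_b / Real.sqrt c_s) ^ 2 * (q ⬝ᵥ M.mulVec q) := by
  intro q
  set C := c_b / Real.sqrt c_s with hC
  have hCpos : 0 < C := div_pos hcb (Real.sqrt_pos.mpr hcs)
  have hAinv : A⁻¹.PosDef := hA.inv
  have hAunit : IsUnit A.det := isUnit_iff_ne_zero.mpr hA.det_pos.ne'
  set w := Bᵀ.mulVec q with hw
  set v := A⁻¹.mulVec w with hv
  -- key equalities
  have hAv : A.mulVec v = w := by
    rw [hv, Matrix.mulVec_mulVec, Matrix.mul_nonsing_inv A hAunit, Matrix.one_mulVec]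
  have hs : q ⬝ᵥ (B * A⁻¹ * Bᵀ).mulVec q = w ⬝ᵥ v := by
    rw [← Matrix.mulVec_mulVec, ← Matrix.mulVec_mulVec, Matrix.dotProduct_mulVec q B,
      ← Matrix.mulVec_transpose]
  set s := w ⬝ᵥ v with hsdef
  have hsnn : 0 ≤ s := by
    have := hAinv.posSemidef.dotProduct_mulVec_nonneg w
    simpa [hsdef, hv] using this
  have hqBv : q ⬝ᵥ B.mulVec v = s := by
    rw [Matrix.dotProduct_mulVec q B, ← Matrix.mulVec_transpose]
  have hvAv : v ⬝ᵥ A.mulVec v = s := by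
    rw [hAv, dotProduct_comm]
  set t := q ⬝ᵥ M.mulVec q with ht
  have htnn : 0 ≤ t := by simpa [ht] using hM.posSemidef.dotProduct_mulVec_nonneg q
  have hb := hbound v q
  rw [hqBv, hvAv, abs_of_nonneg hsnn] at hb
  rw [hs]
  rcases eq_or_lt_of_le hsnn with h0 | hspos
  · rw [← h0]
    positivity
  · have hsq : Real.sqrt s ≤ C * Real.sqrt t := by
      have : Real.sqrt s * Real.sqrt s ≤ (C * Real.sqrt t) * Real.sqrt s := by
        rw [Real.mul_self_sqrt hsnn]
        linarith [hb]
      exact le_of_mul_le_mul_right this (Real.sqrt_pos.mpr hspos)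
    calc s = Real.sqrt s * Real.sqrt s := (Real.mul_self_sqrt hsnn).symm
      _ ≤ (C * Real.sqrt t) * (C * Real.sqrt t) := by
          exact mul_le_mul hsq hsq (Real.sqrt_nonneg s) (by positivity)
      _ = C ^ 2 * t := by
          have := Real.mul_self_sqrt htnn
          nlinarith [this]
end

section
/- Let A ∈ ℝ^{n×n} be symmetric positive definite, B ∈ ℝ^{m×n} have full row rank, and let R ∈ ℝ^{n×n}, M ∈ ℝ^{m×m} be symmetric positive definite matrices such that R is spectrally equivalent to A (there exist α₁, α₂ > 0 with α₁ vᵀRv ≤ vᵀAv ≤ α₂ vᵀRv for all v) and M is spectrally equivalent to the Schur complement B A⁻¹ Bᵀ (there exist γ₁, γ₂ > 0 with γ₁ qᵀMq ≤ qᵀBA⁻¹Bᵀq ≤ γ₂ qᵀMq for all q). Then every eigenvalue λ of the generalized eigenproblem [[A,Bᵀ],[B,0]] x = λ [[R,0],[0,M]] x satisfies λ ∈ [−C₁, −C₂] ∪ [C₃, C₄] for positive constants C₁, C₂, C₃, C₄ depending only on α₁, α₂, γ₁, γ₂. -/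
/-!
Write an eigenvector as `(v, q)` and put `a = vᵀAv`, `r = vᵀRv`, `m = qᵀMq`, `s = qᵀBA⁻¹Bᵀq`.
Pairing the first block row with `v` and using the second gives `a + λm = λr`; hence `λ ≠ 0`,
`λ ≥ α₁` when `λ > 0`, and `m > r` when `λ < 0`. As `λm = vᵀBᵀq = (Av)ᵀA⁻¹(Bᵀq)`,
Cauchy–Schwarz for `A⁻¹` gives `(λm)² ≤ a s ≤ α₂γ₂ r m`, which yields the outer bounds
`λ ≥ -√(α₂γ₂)` and `λ ≤ α₂ + √(α₂γ₂)`. Finally `Bᵀq = λRv - Av`, so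
`s = λ²t - 2λr + a` with `t = (Rv)ᵀA⁻¹(Rv) ≤ r/α₁`; combined with `γ₁m ≤ s` this forces
`μ = -λ` to satisfy `γ₁α₁ ≤ μ(μ²/α₁ + 2μ + α₂)`, which keeps negative eigenvalues away from `0`.
-/

open Matrix

namespace Matrix

lemma PosDef.isSymm {n : Type*} {A : Matrix n n ℝ} (hA : A.PosDef) : A.IsSymm :=
  isHermitian_iff_isSymm.mp hA.isHermitian

section QuadraticForm

variable {n : Type*} [Fintype n]

lemma IsSymm.mulVec_dotProduct_inv_mulVec [DecidableEq n] {α : Type*} [CommRing α]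
    {A : Matrix n n α} (hA : A.IsSymm) (hdet : IsUnit A.det) (v y : n → α) :
    A *ᵥ v ⬝ᵥ A⁻¹ *ᵥ y = v ⬝ᵥ y := by
  rw [← vecMul_transpose A v, ← dotProduct_mulVec, hA.eq, mulVec_mulVec, mul_nonsing_inv _ hdet,
    one_mulVec]

lemma dotProduct_mul_mul_transpose_mulVec {m : Type*} [Fintype m] {α : Type*} [CommSemiring α]
    (B : Matrix m n α) (C : Matrix n n α) (q : m → α) :
    q ⬝ᵥ (B * C * Bᵀ) *ᵥ q = Bᵀ *ᵥ q ⬝ᵥ C *ᵥ (Bᵀ *ᵥ q) := by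
  rw [← mulVec_mulVec, ← mulVec_mulVec, dotProduct_mulVec, ← mulVec_transpose]

lemma PosSemidef.sq_dotProduct_mulVec_le {A : Matrix n n ℝ} (hA : A.PosSemidef) (u v : n → ℝ) :
    (u ⬝ᵥ A *ᵥ v) ^ 2 ≤ (u ⬝ᵥ A *ᵥ u) * (v ⬝ᵥ A *ᵥ v) := by
  -- Cauchy–Schwarz for the semi-inner product `⟪x, y⟫ = xᵀAy`.
  let := A.toSeminormedAddCommGroup hA
  let := A.toInnerProductSpace hA
  have h_inner (x y : n → ℝ) : inner ℝ x y = x ⬝ᵥ A *ᵥ y := dotProduct_comm _ _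
  simpa only [h_inner, sq] using real_inner_mul_inner_self_le u v

lemma IsSymm.sub_mulVec_dotProduct_inv_mulVec [DecidableEq n] {α : Type*} [CommRing α]
    {A : Matrix n n α} (hA : A.IsSymm) (hdet : IsUnit A.det) (y v : n → α) :
    (y - A *ᵥ v) ⬝ᵥ A⁻¹ *ᵥ (y - A *ᵥ v) = y ⬝ᵥ A⁻¹ *ᵥ y - 2 * (v ⬝ᵥ y) + v ⬝ᵥ A *ᵥ v := by
  have h_cross : y ⬝ᵥ A⁻¹ *ᵥ (A *ᵥ v) = v ⬝ᵥ y := by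
    rw [mulVec_mulVec, nonsing_inv_mul _ hdet, one_mulVec, dotProduct_comm]
  rw [sub_dotProduct, mulVec_sub, dotProduct_sub, dotProduct_sub, h_cross,
    hA.mulVec_dotProduct_inv_mulVec hdet, hA.mulVec_dotProduct_inv_mulVec hdet]
  ring

variable {A R : Matrix n n ℝ}

lemma PosDef.sq_dotProduct_le [DecidableEq n] (hA : A.PosDef) (v y : n → ℝ) :
    (v ⬝ᵥ y) ^ 2 ≤ (v ⬝ᵥ A *ᵥ v) * (y ⬝ᵥ A⁻¹ *ᵥ y) := by
  have hdet : IsUnit A.det := (isUnit_iff_isUnit_det A).mp hA.isUnit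
  have h := hA.inv.posSemidef.sq_dotProduct_mulVec_le (A *ᵥ v) y
  rwa [hA.isSymm.mulVec_dotProduct_inv_mulVec hdet,
    hA.isSymm.mulVec_dotProduct_inv_mulVec hdet] at h

lemma PosDef.mul_dotProduct_inv_mulVec_le [DecidableEq n] (hA : A.PosDef) (hR : R.PosSemidef)
    {α : ℝ} (hα : 0 ≤ α) (hAR : ∀ u, α * (u ⬝ᵥ R *ᵥ u) ≤ u ⬝ᵥ A *ᵥ u) (v : n → ℝ) :
    α * (R *ᵥ v ⬝ᵥ A⁻¹ *ᵥ (R *ᵥ v)) ≤ v ⬝ᵥ R *ᵥ v := by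
  -- With `u = A⁻¹Rv`, `t = uᵀAu = uᵀRv`, and Cauchy–Schwarz for `R` gives `α t² ≤ t r`.
  set u := A⁻¹ *ᵥ (R *ᵥ v)
  set t := R *ᵥ v ⬝ᵥ u
  have hAu : A *ᵥ u = R *ᵥ v := by
    rw [mulVec_mulVec, mul_nonsing_inv _ ((isUnit_iff_isUnit_det A).mp hA.isUnit), one_mulVec]
  have ht_A : u ⬝ᵥ A *ᵥ u = t := by rw [hAu, dotProduct_comm]
  have ht_R : u ⬝ᵥ R *ᵥ v = t := dotProduct_comm _ _
  have hcs := hR.sq_dotProduct_mulVec_le u v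
  have hu := hAR u
  have ht : 0 ≤ t := ht_A ▸ hA.posSemidef.dotProduct_mulVec_nonneg u
  have hr : 0 ≤ v ⬝ᵥ R *ᵥ v := hR.dotProduct_mulVec_nonneg v
  rw [ht_R] at hcs
  rw [ht_A] at hu
  have key : t * (α * t) ≤ t * (v ⬝ᵥ R *ᵥ v) := by
    calc t * (α * t) = α * t ^ 2 := by ring
      _ ≤ α * ((u ⬝ᵥ R *ᵥ u) * (v ⬝ᵥ R *ᵥ v)) := mul_le_mul_of_nonneg_left hcs hα
      _ ≤ t * (v ⬝ᵥ R *ᵥ v) := by rw [← mul_assoc]; exact mul_le_mul_of_nonneg_right hu hr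
  rcases ht.eq_or_lt with ht0 | htpos
  · rw [← ht0, mul_zero]; exact hr
  · exact le_of_mul_le_mul_left key htpos

end QuadraticForm

lemma fromBlocks_mulVec_sumElim_eq_smul_iff {l m α : Type*} [Fintype l] [Fintype m] [Semiring α]
    (A : Matrix l l α) (B : Matrix l m α) (C : Matrix m l α) (D : Matrix m m α)
    (R : Matrix l l α) (M : Matrix m m α) (lam : α) (v : l → α) (q : m → α) :
    fromBlocks A B C D *ᵥ Sum.elim v q = lam • (fromBlocks R 0 0 M *ᵥ Sum.elim v q) ↔
      A *ᵥ v + B *ᵥ q = lam • (R *ᵥ v) ∧ C *ᵥ v + D *ᵥ q = lam • (M *ᵥ q) := by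
  simp [fromBlocks_mulVec, funext_iff, Sum.forall]

lemma eq_zero_of_transpose_mulVec_eq_zero {l m : Type*} [Fintype l] [Fintype m]
    {B : Matrix m l ℝ} {C : Matrix l l ℝ} {M : Matrix m m ℝ} (hM : M.PosDef) {γ : ℝ} (hγ : 0 < γ)
    {q : m → ℝ} (hS : γ * (q ⬝ᵥ M *ᵥ q) ≤ q ⬝ᵥ (B * C * Bᵀ) *ᵥ q) (hq : Bᵀ *ᵥ q = 0) : q = 0 := by
  by_contra hq0
  have hpos : 0 < q ⬝ᵥ M *ᵥ q := hM.dotProduct_mulVec_pos hq0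
  rw [dotProduct_mul_mul_transpose_mulVec, hq, zero_dotProduct] at hS
  nlinarith

end Matrix

section SaddlePointSpectrum

/- For an eigenpair `(lam, (v, q))` the scalars are `a = vᵀAv`, `r = vᵀRv`, `m = qᵀMq`,
`s = qᵀBA⁻¹Bᵀq` and `t = (Rv)ᵀA⁻¹(Rv)`. -/
variable {α₁ α₂ γ₁ γ₂ lam a r m s t : ℝ}

lemma sq_mul_le_of_spectral_bounds (hcs : (lam * m) ^ 2 ≤ a * s) (ha : 0 ≤ a) (ha' : a ≤ α₂ * r)
    (hγ₂ : 0 ≤ γ₂) (hm : 0 ≤ m) (hs : s ≤ γ₂ * m) : (lam * m) ^ 2 ≤ α₂ * γ₂ * (r * m) :=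
  calc (lam * m) ^ 2 ≤ a * s := hcs
    _ ≤ a * (γ₂ * m) := mul_le_mul_of_nonneg_left hs ha
    _ ≤ α₂ * r * (γ₂ * m) := mul_le_mul_of_nonneg_right ha' (by positivity)
    _ = α₂ * γ₂ * (r * m) := by ring

lemma min_le_of_le_mul_cubic {c μ : ℝ} (hα₁ : 0 < α₁) (hα₂ : 0 ≤ α₂) (hμ : 0 ≤ μ)
    (h : c ≤ μ * (μ ^ 2 / α₁ + 2 * μ + α₂)) : min 1 (c / (α₁⁻¹ + 2 + α₂)) ≤ μ := by
  rcases le_or_gt 1 μ with hμ1 | hμ1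
  · exact (min_le_left _ _).trans hμ1
  refine (min_le_right _ _).trans ((div_le_iff₀ (by positivity)).mpr ?_)
  have hμ2 : μ ^ 2 ≤ 1 := by nlinarith
  calc c ≤ μ * (μ ^ 2 / α₁ + 2 * μ + α₂) := h
    _ ≤ μ * (1 / α₁ + 2 * 1 + α₂) := by gcongr
    _ = μ * (α₁⁻¹ + 2 + α₂) := by rw [one_div, mul_one]

lemma saddlePoint_neg_eigenvalue_cubic_bound (hlam : lam < 0) (hr : 0 < r) (hα₁ : 0 < α₁)
    (hγ₁ : 0 ≤ γ₁) (ha : α₁ * r ≤ a) (ha' : a ≤ α₂ * r) (hs : γ₁ * m ≤ s)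
    (henergy : a + lam * m = lam * r) (hs_eq : s = lam ^ 2 * t - 2 * lam * r + a) (ht : α₁ * t ≤ r) :
    γ₁ * α₁ ≤ -lam * ((-lam) ^ 2 / α₁ + 2 * -lam + α₂) := by
  have ht' : t ≤ r / α₁ := by rw [le_div_iff₀ hα₁]; linarith
  have hs_le : s ≤ ((-lam) ^ 2 / α₁ + 2 * -lam + α₂) * r := by
    have : lam ^ 2 * t ≤ lam ^ 2 * (r / α₁) := mul_le_mul_of_nonneg_left ht' (sq_nonneg lam)
    rw [hs_eq]
    calc lam ^ 2 * t - 2 * lam * r + a ≤ lam ^ 2 * (r / α₁) - 2 * lam * r + α₂ * r := by linarith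
      _ = ((-lam) ^ 2 / α₁ + 2 * -lam + α₂) * r := by ring
  have ha_le : a ≤ -lam * m := by nlinarith
  have key : γ₁ * α₁ * r ≤ -lam * ((-lam) ^ 2 / α₁ + 2 * -lam + α₂) * r :=
    calc γ₁ * α₁ * r ≤ γ₁ * a := by rw [mul_assoc]; exact mul_le_mul_of_nonneg_left ha hγ₁
      _ ≤ γ₁ * (-lam * m) := mul_le_mul_of_nonneg_left ha_le hγ₁
      _ = -lam * (γ₁ * m) := by ring
      _ ≤ -lam * s := mul_le_mul_of_nonneg_left hs (by linarith)
      _ ≤ -lam * (((-lam) ^ 2 / α₁ + 2 * -lam + α₂) * r) :=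
          mul_le_mul_of_nonneg_left hs_le (by linarith)
      _ = _ := by ring
  exact le_of_mul_le_mul_right key hr

theorem saddlePoint_eigenvalue_mem (hα₁ : 0 < α₁) (hγ₁ : 0 ≤ γ₁) (hγ₂ : 0 ≤ γ₂) (hr : 0 < r)
    (hm : 0 ≤ m) (ha : α₁ * r ≤ a ∧ a ≤ α₂ * r) (hs : γ₁ * m ≤ s ∧ s ≤ γ₂ * m)
    (henergy : a + lam * m = lam * r) (hcs : (lam * m) ^ 2 ≤ a * s)
    (hs_eq : s = lam ^ 2 * t - 2 * lam * r + a) (ht : α₁ * t ≤ r) :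
    lam ∈ Set.Icc (-√(α₂ * γ₂)) (-min 1 (γ₁ * α₁ / (α₁⁻¹ + 2 + α₂))) ∪
      Set.Icc α₁ (α₂ + √(α₂ * γ₂)) := by
  have ha0 : 0 < a := lt_of_lt_of_le (mul_pos hα₁ hr) ha.1
  have hα₂ : 0 ≤ α₂ := by nlinarith
  have hsq := sq_mul_le_of_spectral_bounds hcs ha0.le ha.2 hγ₂ hm hs.2
  rcases lt_trichotomy lam 0 with hneg | rfl | hpos
  · have hrm : r < m := by nlinarith
    have hlam_sq : lam ^ 2 ≤ α₂ * γ₂ := by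
      have : lam ^ 2 * m ^ 2 ≤ α₂ * γ₂ * m ^ 2 := by nlinarith
      exact le_of_mul_le_mul_right this (pow_pos (hr.trans hrm) 2)
    have hcubic := min_le_of_le_mul_cubic hα₁ hα₂ (neg_nonneg.mpr hneg.le)
      (saddlePoint_neg_eigenvalue_cubic_bound hneg hr hα₁ hγ₁ ha.1 ha.2 hs.1 henergy hs_eq ht)
    exact Or.inl ⟨neg_le_of_abs_le (Real.abs_le_sqrt hlam_sq), by linarith⟩
  · linarith
  · have hmr : m ≤ r := by nlinarith
    have hlam_m : lam * m ≤ √(α₂ * γ₂) * r := by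
      refine abs_le_of_sq_le_sq' ?_ (by positivity) |>.2
      calc (lam * m) ^ 2 ≤ α₂ * γ₂ * (r * m) := hsq
        _ ≤ α₂ * γ₂ * (r * r) := by gcongr
        _ = (√(α₂ * γ₂) * r) ^ 2 := by rw [mul_pow, Real.sq_sqrt (by positivity)]; ring
    refine Or.inr ⟨le_of_mul_le_mul_right (by nlinarith) hr, le_of_mul_le_mul_right ?_ hr⟩
    nlinarith

end SaddlePointSpectrum

/-- Optimality of the block-diagonal preconditioner blockdiag(R, M): the generalized
eigenvalues of the saddle point matrix lie in [-C₁,-C₂] ∪ [C₃,C₄] with positive constants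
depending only on the spectral equivalence constants α₁, α₂, γ₁, γ₂. -/
theorem stmt_7 (α₁ α₂ γ₁ γ₂ : ℝ)
    (hα₁ : 0 < α₁) (hα₂ : 0 < α₂) (hγ₁ : 0 < γ₁) (hγ₂ : 0 < γ₂) :
    ∃ C₁ C₂ C₃ C₄ : ℝ, 0 < C₁ ∧ 0 < C₂ ∧ 0 < C₃ ∧ 0 < C₄ ∧
      ∀ (n m : ℕ) (A R : Matrix (Fin n) (Fin n) ℝ)
        (B : Matrix (Fin m) (Fin n) ℝ) (M : Matrix (Fin m) (Fin m) ℝ),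
        A.PosDef → R.PosDef → M.PosDef → B.rank = m →
        (∀ v : Fin n → ℝ,
          α₁ * (v ⬝ᵥ R.mulVec v) ≤ v ⬝ᵥ A.mulVec v ∧
          v ⬝ᵥ A.mulVec v ≤ α₂ * (v ⬝ᵥ R.mulVec v)) →
        (∀ q : Fin m → ℝ,
          γ₁ * (q ⬝ᵥ M.mulVec q) ≤ q ⬝ᵥ (B * A⁻¹ * Bᵀ).mulVec q ∧
          q ⬝ᵥ (B * A⁻¹ * Bᵀ).mulVec q ≤ γ₂ * (q ⬝ᵥ M.mulVec q)) →
        ∀ (lam : ℝ) (x : Fin n ⊕ Fin m → ℝ), x ≠ 0 →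
          (Matrix.fromBlocks A Bᵀ B 0).mulVec x
            = lam • (Matrix.fromBlocks R 0 0 M).mulVec x →
          lam ∈ Set.Icc (-C₁) (-C₂) ∪ Set.Icc C₃ C₄ := by
  refine ⟨√(α₂ * γ₂), min 1 (γ₁ * α₁ / (α₁⁻¹ + 2 + α₂)), α₁, α₂ + √(α₂ * γ₂),
    by positivity, by positivity, hα₁, by positivity, ?_⟩
  intro n m A R B M hA hR hM _ hAR hS lam x hx heq
  rw [← Sum.elim_comp_inl_inr x] at hx heq
  set v := x ∘ Sum.inl
  set q := x ∘ Sum.inr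
  obtain ⟨hrow₁, hrow₂⟩ := (fromBlocks_mulVec_sumElim_eq_smul_iff A Bᵀ B 0 R M lam v q).mp heq
  rw [zero_mulVec, add_zero] at hrow₂
  have hBq : Bᵀ *ᵥ q = lam • (R *ᵥ v) - A *ᵥ v := eq_sub_of_add_eq' hrow₁
  have hcross : v ⬝ᵥ Bᵀ *ᵥ q = lam * (q ⬝ᵥ M *ᵥ q) := by
    rw [dotProduct_mulVec, vecMul_transpose, hrow₂, smul_dotProduct, dotProduct_comm, smul_eq_mul]
  have hv : v ≠ 0 := by
    intro hv0
    have hq0 : q = 0 :=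
      eq_zero_of_transpose_mulVec_eq_zero hM hγ₁ (hS q).1 (by simpa [hv0] using hBq)
    exact hx (by rw [hv0, hq0, Sum.elim_zero_zero])
  have hschur := dotProduct_mul_mul_transpose_mulVec B A⁻¹ q
  have hdet : IsUnit A.det := (isUnit_iff_isUnit_det A).mp hA.isUnit
  have hr : 0 < v ⬝ᵥ R *ᵥ v := hR.dotProduct_mulVec_pos hv
  have hm : 0 ≤ q ⬝ᵥ M *ᵥ q := hM.posSemidef.dotProduct_mulVec_nonneg q
  refine saddlePoint_eigenvalue_mem hα₁ hγ₁.le hγ₂.le hr hm (hAR v) (hS q) ?_ ?_ ?_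
    (hA.mul_dotProduct_inv_mulVec_le hR.posSemidef hα₁.le (fun u => (hAR u).1) v)
  · rw [← hcross, ← dotProduct_add, hrow₁, dotProduct_smul, smul_eq_mul]
  · rw [← hcross, hschur]
    exact hA.sq_dotProduct_le v _
  · rw [hschur, hBq, hA.isSymm.sub_mulVec_dotProduct_inv_mulVec hdet]
    simp only [mulVec_smul, smul_dotProduct, dotProduct_smul, smul_eq_mul]
    ring
end
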